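/- arXiv:1804.08114 — 3 statements merged into one kernel-verified Lean document; each statement's English description precedes it below -/
import Mathlib

section
/- Let E be an invertible bimodule (self-Morita-equivalence bimodule) over a C*-algebra A. On the integer-graded Fock module F_{E,ℤ} = ⊕_{n∈ℤ} E^{⊗n} (with E^{⊗(-n)} := \overline{E}^{⊗n}), the left creation operator L_e (e ∈ E) defined by L_e ξ = e ⊗ ξ on positive-degree summands, L_e a = e·a on degree 0, and L_e(\overline{e₁}⊗⋯⊗\overline{e_n}) = {}_A(e|e₁)·\overline{e₂}⊗⋯⊗\overline{e_n} on negative degrees, is adjointable for the right A-valued inner product, with adjoint given by L_e*(a) = \overline{e}·a, L_e*(e₁⊗⋯⊗e_n) = (e|e₁)_A e₂⊗⋯⊗e_n, L_e*(\overline{e₁}⊗⋯⊗\overline{e_k}) = \overline{e}⊗\overline{e₁}⊗⋯⊗\overline{e_k}, and L_e*(f) = (e|f)_A for f ∈ E. -/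
/-!
STATEMENT 3: For an invertible bimodule E over A, the left creation operator L_e on the
integer-graded Fock module F_{E,ℤ} = ⊕_{n∈ℤ} E^{⊗n} (with E^{⊗(-n)} = Ē^{⊗n}), given by
the formulas of the paper, is adjointable for the right A-valued inner product, with
adjoint L_e* given by the stated formulas.  We model the elementary tensors in F_{E,ℤ}
by words and state the adjoint equation ( L_e ξ | η )_A = ( ξ | L_e* η )_A for all
elementary tensors ξ, η.
-/

/-- An invertible bimodule (self-Morita-equivalence bimodule) over `A`. -/
structure InvertibleBimodule (A E : Type) [NonUnitalNormedRing A] [StarRing A]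
    [AddCommGroup E] where
  smulR : E → A → E
  smulL : A → E → E
  rinner : E → E → A
  linner : E → E → A
  star_rinner : ∀ e f, star (rinner e f) = rinner f e
  star_linner : ∀ e f, star (linner e f) = linner f e
  rinner_smulR : ∀ (e f : E) (a : A), rinner e (smulR f a) = rinner e f * a
  linner_smulL : ∀ (a : A) (e f : E), linner (smulL a e) f = a * linner e f
  rinner_smulL : ∀ (a : A) (e f : E), rinner (smulL a e) f = rinner e (smulL (star a) f)
  linner_smulR : ∀ (e : E) (a : A) (f : E), linner (smulR e a) f = linner e (smulR f (star a))
  -- the imprimitivity condition  {}_A(e|f)·g = e·(f|g)_A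
  imprimitivity : ∀ e f g : E, smulL (linner e f) g = smulR e (rinner f g)

/-- Elementary tensors of the integer-graded Fock module `F_{E,ℤ}`:
degree `0` elements are elements of `A`; positive degree `n` elementary tensors
`e₁ ⊗ ⋯ ⊗ e_n ∈ E^{⊗n}` are words of length `n`; negative degree `-n` elementary
tensors `ē₁ ⊗ ⋯ ⊗ ē_n ∈ Ē^{⊗n}` are conjugate words of length `n`. -/
inductive FockElt (A E : Type) where
  | deg0 : A → FockElt A E
  | pos : List E → FockElt A E
  | neg : List E → FockElt A E

/-- Well-formed elementary tensors (nonempty words in nonzero degrees). -/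
def FockElt.WF {A E : Type} : FockElt A E → Prop
  | .deg0 _ => True
  | .pos l => l ≠ []
  | .neg l => l ≠ []

namespace InvertibleBimodule

variable {A E : Type} [NonUnitalNormedRing A] [StarRing A] [AddCommGroup E]

/-- Left action of `a ∈ A` on the first letter of a (positive-degree) word. -/
def lactList (S : InvertibleBimodule A E) (a : A) : List E → List E
  | [] => []
  | f :: fs => S.smulL a f :: fs

/-- Left action of `a ∈ A` on the first letter of a conjugate word:
`a · ē = \overline{e · a*}`. -/
def lactConj (S : InvertibleBimodule A E) (a : A) : List E → List E
  | [] => []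
  | f :: fs => S.smulR f (star a) :: fs

/-- The right `A`-valued inner product on `E^{⊗n}`:
`(e⊗μ | f⊗ν)_A = (μ | (e|f)_A · ν)_A` recursively. -/
def innerPos (S : InvertibleBimodule A E) : List E → List E → A
  | [e], [f] => S.rinner e f
  | e :: es, f :: fs => innerPos S es (S.lactList (S.rinner e f) fs)
  | _, _ => 0

/-- The right `A`-valued inner product on `Ē^{⊗n}`:
`(ē⊗μ̄ | f̄⊗ν̄)_A = (μ̄ | {}_A(e|f) · ν̄)_A` recursively, with `(ē|f̄)_A = {}_A(e|f)`. -/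
def innerNeg (S : InvertibleBimodule A E) : List E → List E → A
  | [e], [f] => S.linner e f
  | e :: es, f :: fs => innerNeg S es (S.lactConj (S.linner e f) fs)
  | _, _ => 0

/-- The right `A`-valued inner product on `F_{E,ℤ}` (elementary tensors of different
degrees are orthogonal). -/
def finner (S : InvertibleBimodule A E) : FockElt A E → FockElt A E → A
  | .deg0 a, .deg0 b => star a * b
  | .pos es, .pos fs => if es.length = fs.length then S.innerPos es fs else 0
  | .neg es, .neg fs => if es.length = fs.length then S.innerNeg es fs else 0
  | _, _ => 0

/-- The left creation operator `L_e` on elementary tensors: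
`L_e ξ = e ⊗ ξ` in positive degrees, `L_e a = e·a` in degree 0, and
`L_e(ē₁⊗⋯⊗ē_n) = {}_A(e|e₁)·ē₂⊗⋯⊗ē_n` in negative degrees. -/
def creL (S : InvertibleBimodule A E) (e : E) : FockElt A E → FockElt A E
  | .deg0 a => .pos [S.smulR e a]
  | .pos fs => .pos (e :: fs)
  | .neg [] => .deg0 0
  | .neg [f] => .deg0 (S.linner e f)
  | .neg (f :: fs) => .neg (S.lactConj (S.linner e f) fs)

/-- The adjoint `L_e*` on elementary tensors:
`L_e*(a) = ē·a`, `L_e*(e₁⊗⋯⊗e_n) = (e|e₁)_A e₂⊗⋯⊗e_n`,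
`L_e*(ē₁⊗⋯⊗ē_k) = ē⊗ē₁⊗⋯⊗ē_k`, and `L_e*(f) = (e|f)_A` for `f ∈ E`. -/
def annL (S : InvertibleBimodule A E) (e : E) : FockElt A E → FockElt A E
  | .deg0 a => .neg [S.smulL (star a) e]
  | .pos [] => .deg0 0
  | .pos [f] => .deg0 (S.rinner e f)
  | .pos (f :: fs) => .pos (S.lactList (S.rinner e f) fs)
  | .neg fs => .neg (e :: fs)

lemma lactList_length (S : InvertibleBimodule A E) (a : A) (l : List E) :
    (S.lactList a l).length = l.length := by cases l <;> rfl

lemma lactConj_length (S : InvertibleBimodule A E) (a : A) (l : List E) :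
    (S.lactConj a l).length = l.length := by cases l <;> rfl

lemma rinner_smulR' (S : InvertibleBimodule A E) (e f : E) (a : A) :
    S.rinner (S.smulR e a) f = star a * S.rinner e f := by
  have h := congrArg star (S.rinner_smulR f e a)
  rw [S.star_rinner, star_mul, S.star_rinner] at h
  exact h

lemma linner_smulL' (S : InvertibleBimodule A E) (a : A) (e f : E) :
    S.linner f (S.smulL a e) = S.linner f e * star a := by
  have h := congrArg star (S.linner_smulL a e f)
  rw [S.star_linner, star_mul, S.star_linner] at h
  exact h

lemma innerNeg_lactConj (S : InvertibleBimodule A E) (a : A) (xs ys : List E) :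
    S.innerNeg (S.lactConj a xs) ys = S.innerNeg xs (S.lactConj (star a) ys) := by
  match xs, ys with
  | [], [] => rfl
  | [], _ :: _ => rfl
  | [_], [] => rfl
  | _ :: _ :: _, [] => rfl
  | [x], [y] => simp [lactConj, innerNeg, S.linner_smulR]
  | [x], y :: y' :: ys => simp [lactConj, innerNeg, S.linner_smulR]
  | x :: x' :: xs, y :: ys => simp [lactConj, innerNeg, S.linner_smulR]

end InvertibleBimodule

/-- The creation operator `L_e` on the integer-graded Fock module of an invertible
bimodule is adjointable, with adjoint `L_e*` given by the stated formulas: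
`( L_e ξ | η )_A = ( ξ | L_e* η )_A` for all elementary tensors `ξ, η`. -/
theorem creation_operator_adjointable
    (A E : Type) [NonUnitalNormedRing A] [StarRing A] [AddCommGroup E]
    (S : InvertibleBimodule A E) (e : E) :
    ∀ ξ η : FockElt A E, ξ.WF → η.WF →
      S.finner (S.creL e ξ) η = S.finner ξ (S.annL e η) := by
  open InvertibleBimodule in
  intro ξ η hξ hη
  match ξ, η with
  | .deg0 a, .deg0 b => rfl
  | .deg0 a, .pos [] => exact absurd rfl hη
  | .deg0 a, .pos [f] =>
      simp [creL, annL, finner, innerPos, S.rinner_smulR']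
  | .deg0 a, .pos (f :: f' :: fs) =>
      simp [creL, annL, finner]
  | .deg0 a, .neg fs => rfl
  | .pos es, .deg0 b => rfl
  | .pos es, .pos [] => exact absurd rfl hη
  | .pos [], _ => exact absurd rfl hξ
  | .pos (x :: es), .pos [f] =>
      simp [creL, annL, finner]
  | .pos (x :: es), .pos (f :: f' :: fs) =>
      simp only [creL, annL, finner, List.length_cons, S.lactList_length,
        add_left_inj, innerPos, lactList]
  | .pos es, .neg fs => rfl
  | .neg [], _ => exact absurd rfl hξ
  | .neg [x], .deg0 b =>
      simp [creL, annL, finner, innerNeg, S.star_linner, S.linner_smulL']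
  | .neg [x], .pos [] => exact absurd rfl hη
  | .neg [x], .pos [f] => rfl
  | .neg [x], .pos (f :: f' :: fs) => rfl
  | .neg [x], .neg [] => exact absurd rfl hη
  | .neg [x], .neg (f :: fs) =>
      simp [creL, annL, finner]
  | .neg (x :: x' :: es), .deg0 b =>
      simp [creL, annL, finner, lactConj]
  | .neg (x :: x' :: es), .pos [] => exact absurd rfl hη
  | .neg (x :: x' :: es), .pos [f] => rfl
  | .neg (x :: x' :: es), .pos (f :: f' :: fs) => rfl
  | .neg (x :: x' :: es), .neg fs =>
      simp only [creL, annL, finner, List.length_cons, S.lactConj_length,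
        add_left_inj, innerNeg]
      rw [S.innerNeg_lactConj, S.star_linner]
end

section
/- Let G be a finite directed graph with no sources, A = C(G⁰), and E = C(G¹) the edge correspondence with actions (a·e·b)(g) = a(r(g))e(g)b(s(g)) and inner products (e|f)_A(v) = Σ_{s(g)=v} \overline{e(g)}f(g), {}_A(e|f)(v) = Σ_{r(g)=v} e(g)\overline{f(g)}. With β ∈ KK(ℂ, A ⊗ A) the class of the Kasparov module (ℂ, C(G⁰)_{C(G⁰)⊗C(G⁰)}, 0) (diagonal right action and inner product (δ_x|δ_y) = δ_{x,y} δ_x ⊗ δ_x), the interior Kasparov products β ⊗_A [E] and β ⊗_{A^{op}} [\overline{E}^{op}] are both represented by the Kasparov module (ℂ, C(G¹), 0), where C(G¹) is the right Hilbert C(G⁰)⊗C(G⁰)-module with (h·(f₁⊗f₂))(g) = h(g)f₁(s(g))f₂(r(g)) and (h₁|h₂)(v,w) = Σ_{s(g)=v, r(g)=w} \overline{h₁(g)}h₂(g). Hence β ⊗_A [E] = β ⊗_{A^{op}} [\overline{E}^{op}]. -/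
/-!
STATEMENT 14: For a finite directed graph G with no sources, A = C(G⁰), and the edge
correspondence E = C(G¹), the interior Kasparov products β ⊗_A [E] and
β ⊗_{A^op} [Ē^op] are both represented by the Kasparov module (ℂ, C(G¹), 0), where
C(G¹) is the right Hilbert C(G⁰)⊗C(G⁰)-module with (h·(f₁⊗f₂))(g) = h(g)f₁(s g)f₂(r g)
and (h₁|h₂)(v,w) = Σ_{s g = v, r g = w} \overline{h₁(g)} h₂(g).  Hence
β ⊗_A [E] = β ⊗_{A^op} [Ē^op].  The representation is witnessed by explicit
inner-product-preserving, balanced, surjective-up-to-span maps on elementary tensors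
(i.e. unitaries from the interior tensor products onto C(G¹)).
-/

structure FinGraph where
  V : Type
  E : Type
  [fV : Fintype V]
  [fE : Fintype E]
  [dV : DecidableEq V]
  [dE : DecidableEq E]
  r : E → V
  s : E → V

attribute [instance] FinGraph.fV FinGraph.fE FinGraph.dV FinGraph.dE

namespace FinGraph

variable (G : FinGraph)

open scoped ComplexConjugate

/-- The inner product of the module `C(G¹)` over `C(G⁰)⊗C(G⁰) = C(G⁰×G⁰)`:
`(h₁|h₂)(v,w) = Σ_{s g = v, r g = w} conj(h₁ g) h₂ g`. -/
noncomputable def innerY (h₁ h₂ : G.E → ℂ) : G.V × G.V → ℂ := fun vw =>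
  ∑ g : G.E, if G.s g = vw.1 ∧ G.r g = vw.2 then conj (h₁ g) * h₂ g else 0

/-- The inner product on E ⊠ A, the module of `[E] ⊗ [A^op]`. -/
noncomputable def innerZ1 (z z' : G.E × G.V → ℂ) : G.V × G.V → ℂ := fun vw =>
  ∑ g : G.E, if G.s g = vw.1 then conj (z (g, vw.2)) * z' (g, vw.2) else 0

/-- The left action of `C(G⁰×G⁰)` on E ⊠ A (first leg at the range, second leg by
multiplication). -/
def leftActZ1 (f : G.V × G.V → ℂ) (z : G.E × G.V → ℂ) : G.E × G.V → ℂ :=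
  fun p => f (G.r p.1, p.2) * z p

/-- The right action of `C(G⁰×G⁰)` on E ⊠ A. -/
def rightActZ1 (f : G.V × G.V → ℂ) (z : G.E × G.V → ℂ) : G.E × G.V → ℂ :=
  fun p => z p * f (G.s p.1, p.2)

/-- The inner product on A ⊠ Ē^op, the module of `[A] ⊗ [Ē^op]`. -/
noncomputable def innerZ2 (z z' : G.V × G.E → ℂ) : G.V × G.V → ℂ := fun vw =>
  ∑ g : G.E, if G.r g = vw.2 then conj (z (vw.1, g)) * z' (vw.1, g) else 0

/-- The left action of `C(G⁰×G⁰)` on A ⊠ Ē^op. -/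
def leftActZ2 (f : G.V × G.V → ℂ) (z : G.V × G.E → ℂ) : G.V × G.E → ℂ :=
  fun p => f (p.1, G.s p.2) * z p

/-- The right action of `C(G⁰×G⁰)` on A ⊠ Ē^op. -/
def rightActZ2 (f : G.V × G.V → ℂ) (z : G.V × G.E → ℂ) : G.V × G.E → ℂ :=
  fun p => z p * f (p.1, G.r p.2)

/-- The inner product of the Bott module X = C(G⁰) (diagonal structure):
`(x|x')(v,w) = δ_{v,w} conj(x v) x' v`. -/
noncomputable def diagInner (x x' : G.V → ℂ) : G.V × G.V → ℂ := fun vw =>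
  if vw.1 = vw.2 then conj (x vw.1) * x' vw.1 else 0

/-- The balanced pairing X × (E ⊠ A) → C(G¹) realising `β ⊗_A [E]`. -/
def m1 (x : G.V → ℂ) (z : G.E × G.V → ℂ) : G.E → ℂ := fun g => x (G.r g) * z (g, G.r g)

/-- The balanced pairing X × (A ⊠ Ē^op) → C(G¹) realising `β ⊗_{A^op} [Ē^op]`. -/
def m2 (x : G.V → ℂ) (z : G.V × G.E → ℂ) : G.E → ℂ := fun g => x (G.s g) * z (G.s g, g)

end FinGraph

theorem graph_bott_products_agree (G : FinGraph)
    (hnosource : ∀ v : G.V, ∃ g : G.E, G.r g = v) :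
    -- m1 is inner-product preserving: (m1(x⊗z) | m1(x'⊗z'))_Y = (z | (x|x')·z')_{Z₁},
    -- so β ⊗_A [E] is represented by (ℂ, C(G¹), 0)
    (∀ (x x' : G.V → ℂ) (z z' : G.E × G.V → ℂ),
      G.innerY (G.m1 x z) (G.m1 x' z') = G.innerZ1 z (G.leftActZ1 (G.diagInner x x') z')) ∧
    -- m1 carries the right module structure to the stated one on C(G¹)
    (∀ (x : G.V → ℂ) (z : G.E × G.V → ℂ) (f : G.V × G.V → ℂ),
      G.m1 x (G.rightActZ1 f z) = fun g => G.m1 x z g * f (G.s g, G.r g)) ∧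
    -- m1 has dense (here: full) range
    Submodule.span ℂ {h : G.E → ℂ | ∃ x z, h = G.m1 x z} = ⊤ ∧
    -- m2 is inner-product preserving: β ⊗_{A^op} [Ē^op] is represented by (ℂ, C(G¹), 0)
    (∀ (x x' : G.V → ℂ) (z z' : G.V × G.E → ℂ),
      G.innerY (G.m2 x z) (G.m2 x' z') = G.innerZ2 z (G.leftActZ2 (G.diagInner x x') z')) ∧
    -- m2 carries the right module structure to the same one on C(G¹)
    (∀ (x : G.V → ℂ) (z : G.V × G.E → ℂ) (f : G.V × G.V → ℂ),
      G.m2 x (G.rightActZ2 f z) = fun g => G.m2 x z g * f (G.s g, G.r g)) ∧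
    -- m2 has dense (here: full) range; hence β ⊗_A [E] = β ⊗_{A^op} [Ē^op]
    Submodule.span ℂ {h : G.E → ℂ | ∃ x z, h = G.m2 x z} = ⊤ :=  by
  classical
  refine ⟨?_, ?_, ?_, ?_, ?_, ?_⟩
  · intro x x' z z'
    funext vw
    unfold FinGraph.innerY FinGraph.innerZ1 FinGraph.leftActZ1 FinGraph.m1 FinGraph.diagInner
    refine Finset.sum_congr rfl fun g _ => ?_
    by_cases hs : G.s g = vw.1 <;> by_cases hr : G.r g = vw.2 <;>
      simp [hs, hr] <;> ring
  · intro x z f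
    funext g
    simp [FinGraph.m1, FinGraph.rightActZ1, mul_assoc]
  · rw [eq_top_iff]
    intro h _
    have : h = ∑ g : G.E, h g • (fun g' => if g' = g then (1:ℂ) else 0) := by
      funext g'
      simp [Finset.sum_ite_eq, Pi.smul_apply]
    rw [this]
    refine Submodule.sum_mem _ fun g _ => Submodule.smul_mem _ _ (Submodule.subset_span ?_)
    exact ⟨fun _ => 1, fun p => if p.1 = g then 1 else 0, by
      funext g'; simp [FinGraph.m1]⟩
  · intro x x' z z'
    funext vw
    unfold FinGraph.innerY FinGraph.innerZ2 FinGraph.leftActZ2 FinGraph.m2 FinGraph.diagInner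
    refine Finset.sum_congr rfl fun g _ => ?_
    by_cases hr : G.r g = vw.2
    · by_cases hs : G.s g = vw.1
      · simp [hs, hr]; ring
      · simp only [hr, and_true, if_neg hs,
          if_neg (show ¬ vw.1 = G.s g from fun h => hs h.symm), mul_zero, zero_mul,
          if_true]
    · simp [hr]
  · intro x z f
    funext g
    simp [FinGraph.m2, FinGraph.rightActZ2, mul_assoc]
  · rw [eq_top_iff]
    intro h _
    have : h = ∑ g : G.E, h g • (fun g' => if g' = g then (1:ℂ) else 0) := by
      funext g'
      simp [Finset.sum_ite_eq, Pi.smul_apply]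
    rw [this]
    refine Submodule.sum_mem _ fun g _ => Submodule.smul_mem _ _ (Submodule.subset_span ?_)
    exact ⟨fun _ => 1, fun p => if p.2 = g then 1 else 0, by
      funext g'; simp [FinGraph.m2]⟩
end

section
/- Let E be a C*-correspondence over a nuclear C*-algebra A with injective compact left action, and suppose [E] ≠ Id_{KK(A,A)} in KK(A,A). Then there is no class x ∈ KK⁰(O_E, A) with q*x = [P], where q : T_E → O_E is the quotient map and [P] ∈ KK(T_E, A) is Pimsner's class inverse to [ι_{A,T}]. Conversely, if (A, E_A, 0) = (A, A_A, 0) as Kasparov modules, then O_E ≅ A ⊗ C(S¹) and the class x = [(O_E, {}_{ev}A_A, 0)], with ev : C(S¹) → ℂ evaluation at 1, satisfies q* x = [P]. -/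
/-!
STATEMENT 17: For a correspondence E over a nuclear C*-algebra A (injective compact
left action), if [E] ≠ Id in KK(A,A), then no class x ∈ KK⁰(O_E,A) satisfies
q* x = [P]; conversely, if (A,E,0) = (A,A,0) (so [E] = Id), then the class
x = [(O_E, {}_{ev}A, 0)], which restricts to Id over A, satisfies q* x = [P].
The KK-theoretic data is abstracted: R = KK(A,A) as a ring, G = KK(O_E,A),
H = KK(T_E,A), with the restriction maps, Pimsner's mutually inverse KK-equivalences
([ι_{A,T}] and [P]), and exactness of Pimsner's six-term K-homology sequence.
-/

theorem no_lift_of_pimsner_class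
    -- R = KK(A,A), G = KK(O_E, A), H = KK(T_E, A)
    (R : Type) [Ring R] (G H : Type) [AddCommGroup G] [AddCommGroup H]
    -- (ι_{A,O_E})* : KK(O_E,A) → KK(A,A), q* : KK(O_E,A) → KK(T_E,A),
    -- (ι_{A,T_E})* : KK(T_E,A) → KK(A,A)
    (iotaOstar : G →+ R) (qstar : G →+ H) (iotaTstar : H →+ R)
    -- e = [E] ∈ KK(A,A) and Pimsner's class [P] ∈ KK(T_E, A)
    (e : R) (P : H)
    -- (ι_{A,O})* = (ι_{A,T})* ∘ q*
    (hfactor : ∀ x : G, iotaOstar x = iotaTstar (qstar x))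
    -- [ι_{A,T}] ⊗ [P] = Id_{KK(A,A)}: the restriction of [P] along ι_{A,T} is the
    -- identity class
    (hPid : iotaTstar P = 1)
    -- [ι_{A,T}] and [P] are mutually inverse KK-equivalences, so (ι_{A,T})* is an
    -- isomorphism
    (hTiso : Function.Bijective iotaTstar)
    -- exactness of  KK(O_E,A) → KK(A,A) → KK(A,A)  at the middle term, the second
    -- map being ([A]-[E]) ⊗_A ·
    (hexact : ∀ x : R, (∃ y : G, iotaOstar y = x) → (1 - e) * x = 0) :
    -- if [E] ≠ Id_{KK(A,A)} there is no x with q* x = [P] ...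
    (e ≠ 1 → ¬ ∃ x : G, qstar x = P) ∧
    -- ... and conversely any class x₀ (such as [(O_E, {}_{ev}A, 0)] when
    -- (A,E,0) = (A,A,0) and O_E ≅ A ⊗ C(S¹)) with (ι_{A,O})* x₀ = Id satisfies
    -- q* x₀ = [P]
    (∀ x₀ : G, iotaOstar x₀ = 1 → qstar x₀ = P) := by
  constructor
  · rintro he ⟨x, hx⟩
    have h1 : iotaOstar x = 1 := by rw [hfactor, hx, hPid]
    have := hexact 1 ⟨x, h1⟩
    rw [mul_one, sub_eq_zero] at this
    exact he this.symm
  · intro x₀ h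
    apply hTiso.injective
    rw [← hfactor, h, hPid]
end
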